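/- arXiv:1712.04099 — 6 statements merged into one kernel-verified Lean document; each statement's English description precedes it below -/
import Mathlib

section
/- The kissing number in dimension 2 is exactly 6: the maximum number of points on the unit circle in ℝ² with pairwise Euclidean distance at least 1 is 6. -/
/-!
Identify the plane with `ℂ`, so that a unit vector is `exp (θ * I)` with `θ = arg z ∈ (-π, π]`,
and `dist (exp (a * I)) (exp (b * I)) ^ 2 = 2 - 2 * cos (a - b)`: two unit vectors are at
distance at least `1` exactly when `cos (a - b) ≤ 1 / 2`. Splitting `(-π, π]` into six arcs of
length `π / 3`, seven unit vectors would put two of them on one arc, at angular distance less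
than `π / 3`. Conversely the sixth roots of unity have pairwise angular distance in
`[π / 3, 5π / 3]`.
-/

open Complex Real

theorem exists_ne_abs_sub_lt_of_mem_Ico {ι : Type*} [Fintype ι] {f : ι → ℝ} {a δ : ℝ} {k : ℕ}
    (hδ : 0 < δ) (hf : ∀ i, f i ∈ Set.Ico a (a + k * δ)) (hk : k < Fintype.card ι) :
    ∃ i j, i ≠ j ∧ |f i - f j| < δ := by
  have hmaps : ∀ i ∈ Finset.univ, ⌊(f i - a) / δ⌋ ∈ Finset.Ico (0 : ℤ) k := by
    intro i _
    obtain ⟨hlo, hhi⟩ := hf i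
    rw [Finset.mem_Ico, Int.floor_nonneg, Int.floor_lt, Int.cast_natCast, div_lt_iff₀ hδ]
    exact ⟨div_nonneg (sub_nonneg.mpr hlo) hδ.le, by linarith⟩
  obtain ⟨i, -, j, -, hij, hfloor⟩ :=
    Finset.exists_ne_map_eq_of_card_lt_of_maps_to (by simpa using hk) hmaps
  refine ⟨i, j, hij, ?_⟩
  have := Int.abs_sub_lt_one_of_floor_eq_floor hfloor
  rwa [← sub_div, sub_sub_sub_cancel_right, abs_div, abs_of_pos hδ, div_lt_one hδ] at this

namespace Real

theorem half_lt_cos_of_abs_lt {t : ℝ} (ht : |t| < π / 3) : 1 / 2 < cos t := by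
  rw [← cos_abs, ← cos_pi_div_three]
  exact cos_lt_cos_of_nonneg_of_le_pi (abs_nonneg t) (by linarith [pi_pos]) ht

theorem cos_le_half_of_abs_mem_Icc {t : ℝ} (ht : |t| ∈ Set.Icc (π / 3) (5 * π / 3)) :
    cos t ≤ 1 / 2 := by
  obtain ⟨hlo, hhi⟩ := ht
  rw [← cos_abs, ← cos_pi_div_three]
  rcases le_total |t| π with hle | hge
  · exact cos_le_cos_of_nonneg_of_le_pi (by positivity) hle hlo
  · rw [← cos_two_pi_sub]
    exact cos_le_cos_of_nonneg_of_le_pi (by positivity) (by linarith) (by linarith)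

end Real

namespace Complex

theorem dist_exp_mul_I_sq (a b : ℝ) :
    dist (exp (a * I)) (exp (b * I)) ^ 2 = 2 - 2 * Real.cos (a - b) := by
  rw [dist_eq, Complex.sq_norm, normSq_apply, sub_re, sub_im, exp_ofReal_mul_I_re,
    exp_ofReal_mul_I_re, exp_ofReal_mul_I_im, exp_ofReal_mul_I_im, Real.cos_sub]
  linear_combination Real.sin_sq_add_cos_sq a + Real.sin_sq_add_cos_sq b

theorem one_le_dist_exp_mul_I_iff (a b : ℝ) :
    1 ≤ dist (exp (a * I)) (exp (b * I)) ↔ Real.cos (a - b) ≤ 1 / 2 := by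
  rw [← one_le_sq_iff₀ dist_nonneg, dist_exp_mul_I_sq]
  constructor <;> intro h <;> linarith

theorem exp_arg_mul_I_of_norm_eq_one {z : ℂ} (hz : ‖z‖ = 1) : exp (arg z * I) = z := by
  simpa [hz] using norm_mul_exp_arg_mul_I z

theorem card_le_six_of_norm_eq_one_of_one_le_dist {ι : Type*} [Fintype ι] {z : ι → ℂ}
    (hz : ∀ i, ‖z i‖ = 1) (hdist : Pairwise fun i j => 1 ≤ dist (z i) (z j)) :
    Fintype.card ι ≤ 6 := by
  by_contra! hcard
  have harg : ∀ i, -arg (z i) ∈ Set.Ico (-π) (-π + (6 : ℕ) * (π / 3)) := fun i =>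
    ⟨by linarith [arg_le_pi (z i)], by linarith [neg_pi_lt_arg (z i)]⟩
  obtain ⟨i, j, hij, hclose⟩ :=
    exists_ne_abs_sub_lt_of_mem_Ico (by positivity) harg hcard
  have hfar : 1 ≤ dist (z i) (z j) := hdist hij
  rw [← exp_arg_mul_I_of_norm_eq_one (hz i), ← exp_arg_mul_I_of_norm_eq_one (hz j),
    one_le_dist_exp_mul_I_iff] at hfar
  rw [neg_sub_neg, abs_sub_comm] at hclose
  exact (Real.half_lt_cos_of_abs_lt hclose).not_ge hfar

theorem one_le_dist_exp_mul_pi_div_three_of_ne {j k : Fin 6} (hjk : j ≠ k) :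
    1 ≤ dist (exp (((j : ℕ) * (π / 3) : ℝ) * I)) (exp (((k : ℕ) * (π / 3) : ℝ) * I)) := by
  have hgap : (1 : ℤ) ≤ |((j : ℕ) : ℤ) - (k : ℕ)| ∧ |((j : ℕ) : ℤ) - (k : ℕ)| ≤ 5 := by
    have := Fin.val_ne_of_ne hjk
    rw [le_abs, abs_le]
    omega
  obtain ⟨hlo, hhi⟩ : (1 : ℝ) ≤ |((j : ℕ) : ℝ) - (k : ℕ)| ∧ |((j : ℕ) : ℝ) - (k : ℕ)| ≤ 5 := by
    exact_mod_cast hgap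
  rw [one_le_dist_exp_mul_I_iff, ← sub_mul]
  apply Real.cos_le_half_of_abs_mem_Icc
  rw [abs_mul, abs_of_pos (by positivity : 0 < π / 3)]
  constructor <;> nlinarith [pi_pos]

end Complex

/-- The kissing number in dimension 2 is exactly 6: the maximum number of
points on the unit circle in ℝ² with pairwise Euclidean distance at least 1
is 6. -/
theorem kissing_number_dim_two :
    IsGreatest {N : ℕ | ∃ x : Fin N → EuclideanSpace ℝ (Fin 2),
      (∀ i, ‖x i‖ = 1) ∧ ∀ i j, i ≠ j → 1 ≤ dist (x i) (x j)} 6 := by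
  let e : ℂ ≃ₗᵢ[ℝ] EuclideanSpace ℝ (Fin 2) := Complex.orthonormalBasisOneI.repr
  constructor
  · refine ⟨fun k => e (exp (((k : ℕ) * (π / 3) : ℝ) * I)), fun k => ?_, fun j k hjk => ?_⟩
    · rw [e.norm_map, norm_exp_ofReal_mul_I]
    · rw [e.dist_map]
      exact one_le_dist_exp_mul_pi_div_three_of_ne hjk
  · rintro N ⟨x, hnorm, hdist⟩
    simpa using card_le_six_of_norm_eq_one_of_one_le_dist (z := fun i => e.symm (x i))
      (fun i => by rw [e.symm.norm_map, hnorm])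
      fun i j hij => by simpa only [LinearIsometryEquiv.dist_map] using hdist i j hij
end

section
/- Five points cannot be placed on the unit sphere S² so that all pairwise angular distances exceed π/2; equivalently, among any 5 unit vectors in ℝ³ some pair has nonnegative inner product. -/
/-!
If `v₀, …, vₙ` have pairwise negative inner products, then `v₁, …, vₙ` are linearly independent.
Given `∑ gᵢ vᵢ = 0`, moving the negative coefficients to the other side gives one vector
`w = ∑ gᵢ⁺ vᵢ = ∑ gᵢ⁻ vᵢ`, and `⟪w, w⟫` is a sum of terms `gᵢ⁺ gⱼ⁻ ⟪vᵢ, vⱼ⟫ ≤ 0`, so `w = 0`.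
Pairing `w` with `v₀` then forces every `gᵢ⁺` and `gᵢ⁻` to vanish. Hence there are at most
`dim + 1` such vectors, i.e. at most 4 in `ℝ³`.
-/

open scoped RealInnerProductSpace

open Finset

section ObtuseFamily

variable {V ι : Type*} [NormedAddCommGroup V] [InnerProductSpace ℝ V] [Fintype ι]

lemma inner_sum_smul_sum_smul_nonpos_of_inner_neg {v : ι → V}
    (hv : Pairwise fun i j => ⟪v i, v j⟫ < 0) {c d : ι → ℝ} (hc : ∀ i, 0 ≤ c i)
    (hd : ∀ i, 0 ≤ d i) (hcd : ∀ i, c i * d i = 0) :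
    ⟪∑ i, c i • v i, ∑ j, d j • v j⟫ ≤ 0 := by
  rw [sum_inner]
  refine sum_nonpos fun i _ => ?_
  rw [inner_sum]
  refine sum_nonpos fun j _ => ?_
  rw [real_inner_smul_left, real_inner_smul_right, ← mul_assoc]
  rcases eq_or_ne i j with rfl | hij
  · rw [hcd, zero_mul]
  · exact mul_nonpos_of_nonneg_of_nonpos (mul_nonneg (hc i) (hd j)) (hv hij).le

lemma eq_zero_of_sum_smul_eq_zero_of_inner_neg {v : ι → V} {t : V} (ht : ∀ i, ⟪v i, t⟫ < 0)
    {c : ι → ℝ} (hc : ∀ i, 0 ≤ c i) (hsum : ∑ i, c i • v i = 0) : c = 0 := by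
  have hterm : ∀ i ∈ univ, c i * ⟪v i, t⟫ ≤ 0 := fun i _ =>
    mul_nonpos_of_nonneg_of_nonpos (hc i) (ht i).le
  have hzero : ∑ i, c i * ⟪v i, t⟫ = 0 := by
    simpa only [sum_inner, real_inner_smul_left, inner_zero_left] using congrArg (⟪·, t⟫) hsum
  funext i
  have := (sum_eq_zero_iff_of_nonpos hterm).mp hzero i (mem_univ i)
  exact (mul_eq_zero.mp this).resolve_right (ht i).ne

lemma Real.posPart_mul_negPart (a : ℝ) : a⁺ * a⁻ = 0 := by
  rcases le_total a 0 with h | h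
  · rw [posPart_eq_zero.mpr h, zero_mul]
  · rw [negPart_eq_zero.mpr h, mul_zero]

theorem linearIndependent_of_pairwise_inner_neg {v : ι → V}
    (hv : Pairwise fun i j => ⟪v i, v j⟫ < 0) {t : V} (ht : ∀ i, ⟪v i, t⟫ < 0) :
    LinearIndependent ℝ v := by
  rw [Fintype.linearIndependent_iff]
  intro g hg
  have hparts : ∑ i, (g i)⁺ • v i = ∑ i, (g i)⁻ • v i := by
    rw [← sub_eq_zero, ← sum_sub_distrib]
    simpa only [← sub_smul, posPart_sub_negPart] using hg
  have hw : ∑ i, (g i)⁺ • v i = 0 := by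
    refine inner_self_eq_zero.mp (le_antisymm ?_ real_inner_self_nonneg)
    nth_rewrite 2 [hparts]
    exact inner_sum_smul_sum_smul_nonpos_of_inner_neg hv (fun i => posPart_nonneg _)
      (fun i => negPart_nonneg _) (fun i => Real.posPart_mul_negPart _)
  have hpos := eq_zero_of_sum_smul_eq_zero_of_inner_neg ht (fun i => posPart_nonneg _) hw
  have hneg := eq_zero_of_sum_smul_eq_zero_of_inner_neg ht (fun i => negPart_nonneg _)
    (hparts ▸ hw)
  intro i
  rw [← posPart_sub_negPart (g i), congrFun hpos i, congrFun hneg i, Pi.zero_apply, sub_zero]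

theorem card_le_finrank_add_one_of_pairwise_inner_neg [FiniteDimensional ℝ V] {v : ι → V}
    (hv : Pairwise fun i j => ⟪v i, v j⟫ < 0) : Fintype.card ι ≤ Module.finrank ℝ V + 1 := by
  classical
  rcases isEmpty_or_nonempty ι with _ | ⟨⟨i₀⟩⟩
  · simp
  have hli : LinearIndependent ℝ fun i : {i // i ≠ i₀} => v i :=
    linearIndependent_of_pairwise_inner_neg (t := v i₀)
      (fun i j hij => hv (Subtype.coe_ne_coe.mpr hij)) fun i => hv i.2
  have := hli.fintype_card_le_finrank
  rw [Fintype.card_subtype_compl, Fintype.card_subtype_eq] at this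
  omega

end ObtuseFamily

theorem five_unit_vectors_nonneg_inner_general (x : Fin 5 → EuclideanSpace ℝ (Fin 3)) :
    ∃ i j, i ≠ j ∧ 0 ≤ ⟪x i, x j⟫ := by
  by_contra! h
  have := card_le_finrank_add_one_of_pairwise_inner_neg (v := x) fun i j => h i j
  simp [finrank_euclideanSpace] at this

/-- Among any 5 unit vectors in ℝ³ some pair (of distinct indices) has
nonnegative inner product; equivalently, five points cannot be placed on S²
with all pairwise angular distances exceeding π/2. -/
theorem five_unit_vectors_nonneg_inner (x : Fin 5 → EuclideanSpace ℝ (Fin 3))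
    (hx : ∀ i, ‖x i‖ = 1) :
    ∃ i j, i ≠ j ∧ 0 ≤ ⟪x i, x j⟫ :=
  five_unit_vectors_nonneg_inner_general x
end

section
/- Einhorn–Schoenberg theorem: a simple graph G on n vertices has a Euclidean two-distance representation in ℝ^{n−2} or lower dimension unless G is a disjoint union of cliques; equivalently, dim₂(G) = n − 1 if and only if G is a disjoint union of complete graphs. -/
/-- `G` has a Euclidean two-distance representation in ℝ^d: there are
`0 < a ≤ b` and an embedding of the vertices such that adjacent vertices are
at distance `a` and non-adjacent distinct vertices at distance `b`. -/
def HasTwoDistRep {n : ℕ} (G : SimpleGraph (Fin n)) [DecidableRel G.Adj] (d : ℕ) : Prop :=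
  ∃ a b : ℝ, 0 < a ∧ a ≤ b ∧
    ∃ f : Fin n → EuclideanSpace ℝ (Fin d),
      ∀ u v : Fin n, u ≠ v →
        dist (f u) (f v) = if G.Adj u v then a else b

/-- The Euclidean representation number `dim₂(G)`: the smallest `d` such that
`G` has a two-distance representation in ℝ^d. -/
noncomputable def dimTwo {n : ℕ} (G : SimpleGraph (Fin n)) [DecidableRel G.Adj] : ℕ :=
  sInf {d : ℕ | HasTwoDistRep G d}

/-!
A regular simplex realises every graph on `n` vertices in `ℝ^(n-1)`. For the converse we use
Schoenberg's criterion: a symmetric matrix `D` with zero diagonal is the matrix of squared distances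
of some points `pᵢ` iff `wᵀ D w ≤ 0` whenever `∑ wᵢ = 0`, and then `wᵀ D w = -2 ‖∑ wᵢ pᵢ‖²`, so the
null vectors of this form are exactly the affine dependences of the points.

A two-distance representation with squared distances `α ≤ β` has
`D = β (J - I) + (α - β) A`, so for sum-zero `w`, `wᵀ D w = (α - β) wᵀ A w - β wᵀ w`.
If `G` is a disjoint union of cliques then `A + I` is positive semidefinite, which forces
`wᵀ D w ≤ -α wᵀ w < 0` for `w ≠ 0`: the points are affinely independent and need `n - 1` dimensions.
If `u - v - w` is an induced path, the vector `e_u + e_w - 2 e_v` has Rayleigh quotient `-4/3 < -1`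
for `A`, so the minimal Rayleigh quotient `μ` of `A` on sum-zero vectors is `< -1`. Taking
`(α, β) = (-μ - 1, -μ)` makes `D` conditionally negative semidefinite with the minimiser as a null
vector, and the resulting affinely dependent configuration lives in `ℝ^(n-2)`.
-/

open Matrix Module

section Euclidean

variable {ι E : Type*} [Fintype ι] [NormedAddCommGroup E] [InnerProductSpace ℝ E]

theorem dotProduct_mulVec_eq_neg_two_mul_norm_sq {p : ι → E} {D : Matrix ι ι ℝ}
    (hD : ∀ i j, dist (p i) (p j) ^ 2 = D i j) {w : ι → ℝ} (hw : ∑ i, w i = 0) :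
    w ⬝ᵥ D *ᵥ w = -2 * ‖∑ i, w i • p i‖ ^ 2 := by
  have hterm : ∀ i j, w i * (D i j * w j) = w j * (w i * ‖p i‖ ^ 2) + w i * (w j * ‖p j‖ ^ 2)
      - 2 * (w i * (w j * inner ℝ (p i) (p j))) := by
    intro i j
    rw [← hD, dist_eq_norm, norm_sub_sq_real]
    ring
  have hinner : ‖∑ i, w i • p i‖ ^ 2 = ∑ i, ∑ j, w i * (w j * inner ℝ (p i) (p j)) := by
    simp_rw [← real_inner_self_eq_norm_sq, sum_inner, inner_sum, real_inner_smul_left,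
      real_inner_smul_right]
  calc w ⬝ᵥ D *ᵥ w = ∑ i, ∑ j, w i * (D i j * w j) := by
        simp only [dotProduct, mulVec, Finset.mul_sum]
    _ = (∑ j, w j) * (∑ i, w i * ‖p i‖ ^ 2) + (∑ i, w i) * (∑ j, w j * ‖p j‖ ^ 2)
          - 2 * ‖∑ i, w i • p i‖ ^ 2 := by
        simp only [hterm, Finset.sum_sub_distrib, Finset.sum_add_distrib, ← Finset.mul_sum,
          ← Finset.sum_mul, hinner]
    _ = -2 * ‖∑ i, w i • p i‖ ^ 2 := by simp [hw]

theorem affineIndependent_iff_of_dist_sq_eq {p : ι → E} {D : Matrix ι ι ℝ}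
    (hD : ∀ i j, dist (p i) (p j) ^ 2 = D i j) :
    AffineIndependent ℝ p ↔ ∀ w : ι → ℝ, ∑ i, w i = 0 → w ⬝ᵥ D *ᵥ w = 0 → w = 0 := by
  rw [affineIndependent_iff_of_fintype]
  refine forall_congr' fun w => forall_congr' fun hw => ?_
  rw [Finset.weightedVSub_eq_linear_combination _ hw,
    dotProduct_mulVec_eq_neg_two_mul_norm_sq hD hw, funext_iff]
  simp

theorem exists_linearIsometry_of_finrank_le [FiniteDimensional ℝ E] {k : ℕ}
    (h : finrank ℝ E ≤ k) : Nonempty (E →ₗᵢ[ℝ] EuclideanSpace ℝ (Fin k)) := by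
  let b := stdOrthonormalBasis ℝ E
  let e : Fin (finrank ℝ E) → EuclideanSpace ℝ (Fin k) :=
    fun i => EuclideanSpace.basisFun (Fin k) ℝ (Fin.castLE h i)
  let f := b.toBasis.constr ℝ e
  have hfb : ⇑f ∘ ⇑b.toBasis = e := funext fun i => b.toBasis.constr_basis ℝ e i
  exact ⟨f.isometryOfOrthonormal (v := b.toBasis) (by simp [b.orthonormal])
    (hfb ▸ (EuclideanSpace.basisFun (Fin k) ℝ).orthonormal.comp _ (Fin.castLE_injective h))⟩

theorem exists_dist_eq_of_finrank_vectorSpan_le (p : ι → E) {k : ℕ}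
    (h : finrank ℝ (vectorSpan ℝ (Set.range p)) ≤ k) :
    ∃ q : ι → EuclideanSpace ℝ (Fin k), ∀ i j, dist (q i) (q j) = dist (p i) (p j) := by
  cases isEmpty_or_nonempty ι with
  | inl => exact ⟨isEmptyElim, isEmptyElim⟩
  | inr hι =>
    obtain ⟨i₀⟩ := hι
    obtain ⟨L⟩ := exists_linearIsometry_of_finrank_le h
    refine ⟨fun i => L ⟨p i -ᵥ p i₀, vsub_mem_vectorSpan ℝ (Set.mem_range_self i)
      (Set.mem_range_self i₀)⟩, fun i j => ?_⟩
    rw [dist_eq_norm, dist_eq_norm, ← map_sub, L.norm_map, Submodule.coe_norm]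
    simp

end Euclidean

theorem Submodule.exists_ne_zero_forall_mul_le_mul {E : Type*} [NormedAddCommGroup E]
    [NormedSpace ℝ E] [FiniteDimensional ℝ E] {S : Submodule ℝ E} (hS : S ≠ ⊥) {q r : E → ℝ}
    (hq : Continuous q) (hr : Continuous r) (hq_smul : ∀ (t : ℝ) x, q (t • x) = t ^ 2 * q x)
    (hr_smul : ∀ (t : ℝ) x, r (t • x) = t ^ 2 * r x) (hr_pos : ∀ x ∈ S, x ≠ 0 → 0 < r x) :
    ∃ l ∈ S, l ≠ 0 ∧ ∀ x ∈ S, q l * r x ≤ q x * r l := by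
  set K := (S : Set E) ∩ Metric.sphere 0 1
  have hK : IsCompact K := (isCompact_sphere 0 1).inter_left S.closed_of_finiteDimensional
  have hnorm : ∀ x ∈ S, x ≠ 0 → ‖x‖⁻¹ • x ∈ K := fun x hxS hx =>
    ⟨S.smul_mem _ hxS, by simp [norm_smul, hx]⟩
  obtain ⟨z, hzS, hz⟩ := S.ne_bot_iff.mp hS
  have hK_pos : ∀ y ∈ K, 0 < r y := fun y hy =>
    hr_pos y hy.1 (ne_zero_of_mem_unit_sphere ⟨y, hy.2⟩)
  obtain ⟨l, hlK, hmin⟩ := hK.exists_isMinOn ⟨_, hnorm z hzS hz⟩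
    (hq.continuousOn.div hr.continuousOn fun y hy => (hK_pos y hy).ne')
  refine ⟨l, hlK.1, ne_zero_of_mem_unit_sphere ⟨l, hlK.2⟩, fun x hxS => ?_⟩
  by_cases hx : x = 0
  · have h0 : ∀ f : E → ℝ, (∀ (t : ℝ) x, f (t • x) = t ^ 2 * f x) → f 0 = 0 := fun f hf => by
      simpa using hf 0 0
    simp [hx, h0 q hq_smul, h0 r hr_smul]
  set y := ‖x‖⁻¹ • x
  have hyK : y ∈ K := hnorm x hxS hx
  have hxy : x = ‖x‖ • y := by simp [y, smul_smul, norm_ne_zero_iff.mpr hx]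
  have hly : q l * r y ≤ q y * r l :=
    (div_le_div_iff₀ (hK_pos l hlK) (hK_pos y hyK)).mp (hmin hyK)
  rw [hxy, hq_smul, hr_smul]
  linarith [mul_le_mul_of_nonneg_left hly (sq_nonneg ‖x‖)]

section Schoenberg

variable {ι : Type*} [Fintype ι]

theorem Matrix.PosSemidef.exists_gram_eq {M : Matrix ι ι ℝ} (hM : M.PosSemidef) :
    ∃ (m : ℕ) (p : ι → EuclideanSpace ℝ (Fin m)), gram ℝ p = M := by
  obtain ⟨m, v, rfl⟩ := Matrix.posSemidef_iff_eq_sum_vecMulVec.mp hM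
  refine ⟨m, fun i => WithLp.toLp 2 fun t => v t i, ?_⟩
  ext i j
  simp [gram_apply, PiLp.inner_apply, Matrix.sum_apply, vecMulVec_apply, mul_comm]

variable [DecidableEq ι]

theorem posSemidef_smul_vecMulVec_add_vecMulVec_sub {D : Matrix ι ι ℝ} (hsymm : D.IsSymm)
    {i₀ : ι} (hi₀ : D i₀ i₀ = 0) (hneg : ∀ x : ι → ℝ, ∑ i, x i = 0 → x ⬝ᵥ D *ᵥ x ≤ 0) :
    ((2⁻¹ : ℝ) • (vecMulVec (D i₀) 1 + vecMulVec 1 (D i₀) - D)).PosSemidef := by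
  refine .of_dotProduct_mulVec_nonneg ?_ fun x => ?_
  · simp [IsHermitian, conjTranspose_eq_transpose_of_trivial, hsymm.eq, add_comm]
  have hrow : (D *ᵥ x) i₀ = D i₀ ⬝ᵥ x := rfl
  have hcol : x ⬝ᵥ D.col i₀ = D i₀ ⬝ᵥ x := by
    rw [dotProduct_comm]
    congr 1
    ext j
    exact hsymm.apply i₀ j
  -- `xᵀ M x = -½ yᵀ D y` for the sum-zero vector `y = x - (∑ x) • e i₀`
  have hshift := hneg (x - (∑ i, x i) • Pi.single i₀ 1)
    (by simp [Finset.sum_sub_distrib, Pi.single_apply])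
  simp only [star_trivial, smul_mulVec, add_mulVec, sub_mulVec, vecMulVec_mulVec, mulVec_sub,
    mulVec_smul, dotProduct_sub, sub_dotProduct, dotProduct_smul, smul_dotProduct, dotProduct_add,
    single_dotProduct, mulVec_single_one, hrow, hcol, col_apply, hi₀, op_smul_eq_mul, smul_eq_mul,
    dotProduct_one, one_dotProduct, dotProduct_comm x (D i₀)] at hshift ⊢
  linarith

theorem exists_dist_sq_eq_of_condNegSemidef {D : Matrix ι ι ℝ} (hsymm : D.IsSymm)
    (hdiag : ∀ i, D i i = 0) (hneg : ∀ x : ι → ℝ, ∑ i, x i = 0 → x ⬝ᵥ D *ᵥ x ≤ 0) :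
    ∃ (m : ℕ) (p : ι → EuclideanSpace ℝ (Fin m)), ∀ i j, dist (p i) (p j) ^ 2 = D i j := by
  cases isEmpty_or_nonempty ι with
  | inl => exact ⟨0, isEmptyElim, isEmptyElim⟩
  | inr hι =>
    obtain ⟨i₀⟩ := hι
    obtain ⟨m, p, hp⟩ :=
      (posSemidef_smul_vecMulVec_add_vecMulVec_sub hsymm (hdiag i₀) hneg).exists_gram_eq
    refine ⟨m, p, fun i j => ?_⟩
    have hM := fun i j => congrFun (congrFun hp i) j
    simp only [gram_apply, Matrix.smul_apply, Matrix.add_apply, Matrix.sub_apply,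
      vecMulVec_apply, Pi.one_apply, smul_eq_mul] at hM
    rw [dist_eq_norm, norm_sub_sq_real, ← real_inner_self_eq_norm_sq, ← real_inner_self_eq_norm_sq,
      hM, hM, hM, hdiag, hdiag]
    ring

end Schoenberg

namespace SimpleGraph

variable {V : Type*} (G : SimpleGraph V)

theorem eq_or_adj_of_reachable
    (htrans : ∀ u v w, G.Adj u v → G.Adj v w → u ≠ w → G.Adj u w) {u v : V}
    (h : G.Reachable u v) : u = v ∨ G.Adj u v := by
  replace h := (reachable_iff_reflTransGen u v).mp h
  induction h with
  | refl => exact .inl rfl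
  | @tail b c _ hbc ih =>
    rcases ih with rfl | hub
    · exact .inr hbc
    · by_cases huc : u = c
      · exact .inl huc
      · exact .inr (htrans u b c hub hbc huc)

variable [DecidableEq V] [DecidableRel G.Adj]

theorem posSemidef_adjMatrix_add_one [Fintype V]
    (htrans : ∀ u v w, G.Adj u v → G.Adj v w → u ≠ w → G.Adj u w) :
    (G.adjMatrix ℝ + 1).PosSemidef := by
  classical
  suffices G.adjMatrix ℝ + 1 =
      gram ℝ fun u => EuclideanSpace.single (G.connectedComponentMk u) (1 : ℝ) by
    rw [this]
    exact posSemidef_gram ℝ _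
  ext u v
  rw [gram_apply, EuclideanSpace.inner_single_left, PiLp.single_apply, ConnectedComponent.eq]
  by_cases huv : u = v
  · subst huv
    simp
  · have : G.Reachable u v ↔ G.Adj u v :=
      ⟨fun h => (G.eq_or_adj_of_reachable htrans h).resolve_left huv, Adj.reachable⟩
    simp [huv, this]

def sqDistMatrix (α β : ℝ) : Matrix V V ℝ :=
  β • (vecMulVec 1 1 - 1) + (α - β) • G.adjMatrix ℝ

theorem sqDistMatrix_apply (α β : ℝ) (u v : V) :
    G.sqDistMatrix α β u v = if u = v then 0 else if G.Adj u v then α else β := by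
  by_cases huv : u = v
  · subst huv
    simp [sqDistMatrix]
  · by_cases hadj : G.Adj u v <;> simp [sqDistMatrix, huv, hadj]

theorem isSymm_sqDistMatrix (α β : ℝ) : (G.sqDistMatrix α β).IsSymm := by
  have hJ : (vecMulVec (1 : V → ℝ) 1).IsSymm := transpose_vecMulVec _ _
  exact ((hJ.sub isSymm_one).smul β).add (G.isSymm_adjMatrix.smul (α - β))

theorem dotProduct_sqDistMatrix_mulVec [Fintype V] (α β : ℝ) {x : V → ℝ} (hx : ∑ i, x i = 0) :
    x ⬝ᵥ G.sqDistMatrix α β *ᵥ x = (α - β) * (x ⬝ᵥ G.adjMatrix ℝ *ᵥ x) - β * (x ⬝ᵥ x) := by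
  simp only [sqDistMatrix, add_mulVec, sub_mulVec, smul_mulVec, vecMulVec_mulVec, one_mulVec,
    dotProduct_add, dotProduct_sub, dotProduct_smul, one_dotProduct, hx, MulOpposite.op_zero,
    zero_smul, dotProduct_zero, smul_eq_mul]
  ring

theorem exists_sum_eq_zero_dotProduct_adjMatrix_mulVec_lt [Fintype V] {u v w : V}
    (huv : G.Adj u v) (hvw : G.Adj v w) (huw : u ≠ w) (hnuw : ¬G.Adj u w) :
    ∃ z : V → ℝ, ∑ i, z i = 0 ∧ z ⬝ᵥ G.adjMatrix ℝ *ᵥ z < -(z ⬝ᵥ z) := by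
  have hu : u ≠ v := huv.ne
  have hw : w ≠ v := hvw.ne.symm
  have hnwu : ¬G.Adj w u := fun h => hnuw h.symm
  -- `z ⬝ᵥ z = 6` and `z ⬝ᵥ A *ᵥ z = -8`
  refine ⟨Pi.single u 1 + Pi.single w 1 - Pi.single v 2, ?_, ?_⟩
  · norm_num [Finset.sum_add_distrib, Finset.sum_sub_distrib]
  · norm_num [mulVec_add, mulVec_sub, mulVec_single, dotProduct_add, dotProduct_sub, huv, hvw,
      hnuw, huv.symm, hvw.symm, hu, hw, huw, hu.symm, hw.symm, huw.symm, hnwu]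

theorem exists_sqDistMatrix_condNegSemidef_of_exists_lt [Fintype V]
    (hz : ∃ z : V → ℝ, ∑ i, z i = 0 ∧ z ⬝ᵥ G.adjMatrix ℝ *ᵥ z < -(z ⬝ᵥ z)) :
    ∃ α β : ℝ, 0 < α ∧ α ≤ β ∧
      (∀ x : V → ℝ, ∑ i, x i = 0 → x ⬝ᵥ G.sqDistMatrix α β *ᵥ x ≤ 0) ∧
      ∃ l : V → ℝ, l ≠ 0 ∧ ∑ i, l i = 0 ∧ l ⬝ᵥ G.sqDistMatrix α β *ᵥ l = 0 := by
  obtain ⟨z, hz, hzA⟩ := hz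
  let S : Submodule ℝ (V → ℝ) := LinearMap.ker (∑ i, LinearMap.proj i)
  have hS : ∀ x, x ∈ S ↔ ∑ i, x i = 0 := fun x => by simp [S]
  have hz0 : z ≠ 0 := by
    rintro rfl
    simp at hzA
  have hpos : ∀ x : V → ℝ, x ≠ 0 → 0 < x ⬝ᵥ x := fun x hx =>
    lt_of_le_of_ne (Finset.sum_nonneg fun i _ => mul_self_nonneg (x i))
      (Ne.symm (dotProduct_self_eq_zero.not.mpr hx))
  obtain ⟨l, hlS, hl0, hmin⟩ := Submodule.exists_ne_zero_forall_mul_le_mul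
    (S.ne_bot_iff.mpr ⟨z, (hS z).mpr hz, hz0⟩) (q := fun x => x ⬝ᵥ G.adjMatrix ℝ *ᵥ x)
    (r := fun x => x ⬝ᵥ x) (by fun_prop) (by fun_prop)
    (fun t x => by simp only [mulVec_smul, dotProduct_smul, smul_dotProduct, smul_eq_mul]; ring)
    (fun t x => by simp only [dotProduct_smul, smul_dotProduct, smul_eq_mul]; ring)
    (fun x _ hx => hpos x hx)
  simp only [hS] at hmin hlS
  -- with `μ = lᵀAl / lᵀl < -1` the minimal Rayleigh quotient, this is `(α, β) = lᵀl • (-μ - 1, -μ)`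
  have hl := hpos l hl0
  have hlA : l ⬝ᵥ G.adjMatrix ℝ *ᵥ l < -(l ⬝ᵥ l) := by
    nlinarith [hmin z hz, hpos z hz0]
  refine ⟨-(l ⬝ᵥ G.adjMatrix ℝ *ᵥ l) - l ⬝ᵥ l, -(l ⬝ᵥ G.adjMatrix ℝ *ᵥ l), by linarith,
    by linarith, fun x hx => ?_, l, hl0, hlS, ?_⟩
  · rw [dotProduct_sqDistMatrix_mulVec G _ _ hx]
    linarith [hmin x hx]
  · rw [dotProduct_sqDistMatrix_mulVec G _ _ hlS]
    ring

end SimpleGraph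

section TwoDistance

open SimpleGraph

variable {n : ℕ} (G : SimpleGraph (Fin n)) [DecidableRel G.Adj]

theorem hasTwoDistRep_iff {d : ℕ} :
    HasTwoDistRep G d ↔ ∃ α β : ℝ, 0 < α ∧ α ≤ β ∧
      ∃ f : Fin n → EuclideanSpace ℝ (Fin d),
        ∀ u v, dist (f u) (f v) ^ 2 = G.sqDistMatrix α β u v := by
  constructor
  · rintro ⟨a, b, ha, hab, f, hf⟩
    refine ⟨a ^ 2, b ^ 2, by positivity, by gcongr, f, fun u v => ?_⟩
    rw [sqDistMatrix_apply]
    by_cases huv : u = v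
    · simp [huv]
    · rw [hf u v huv]
      split_ifs <;> rfl
  · rintro ⟨α, β, hα, hαβ, f, hf⟩
    refine ⟨√α, √β, Real.sqrt_pos.mpr hα, Real.sqrt_le_sqrt hαβ, f, fun u v huv => ?_⟩
    rw [← Real.sqrt_sq dist_nonneg, hf, sqDistMatrix_apply, if_neg huv]
    split_ifs <;> rfl

theorem hasTwoDistRep_of_dist_sq_eq {E : Type*} [NormedAddCommGroup E] [InnerProductSpace ℝ E]
    {α β : ℝ} (hα : 0 < α) (hαβ : α ≤ β) {p : Fin n → E}
    (hp : ∀ u v, dist (p u) (p v) ^ 2 = G.sqDistMatrix α β u v) {k : ℕ}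
    (hk : finrank ℝ (vectorSpan ℝ (Set.range p)) ≤ k) : HasTwoDistRep G k := by
  obtain ⟨q, hq⟩ := exists_dist_eq_of_finrank_vectorSpan_le p hk
  exact (hasTwoDistRep_iff G).mpr ⟨α, β, hα, hαβ, q, fun u v => hq u v ▸ hp u v⟩

theorem exists_dist_sq_eq_sqDistMatrix {α β : ℝ}
    (hneg : ∀ x : Fin n → ℝ, ∑ i, x i = 0 → x ⬝ᵥ G.sqDistMatrix α β *ᵥ x ≤ 0) :
    ∃ (m : ℕ) (p : Fin n → EuclideanSpace ℝ (Fin m)),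
      ∀ u v, dist (p u) (p v) ^ 2 = G.sqDistMatrix α β u v :=
  exists_dist_sq_eq_of_condNegSemidef (G.isSymm_sqDistMatrix α β)
    (fun u => by simp [sqDistMatrix_apply]) hneg

theorem hasTwoDistRep_sub_one : HasTwoDistRep G (n - 1) := by
  obtain ⟨m, p, hp⟩ := exists_dist_sq_eq_sqDistMatrix G (α := 1) (β := 1) fun x hx => by
    rw [dotProduct_sqDistMatrix_mulVec G 1 1 hx]
    have : 0 ≤ x ⬝ᵥ x := Finset.sum_nonneg fun i _ => mul_self_nonneg (x i)
    linarith
  refine hasTwoDistRep_of_dist_sq_eq G one_pos le_rfl hp ?_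
  rcases n with _ | n
  · simp [Set.range_eq_empty]
  · exact finrank_vectorSpan_range_le ℝ p (by simp)

theorem hasTwoDistRep_sub_two {u v w : Fin n} (huv : G.Adj u v) (hvw : G.Adj v w) (huw : u ≠ w)
    (hnuw : ¬G.Adj u w) : HasTwoDistRep G (n - 2) := by
  obtain ⟨α, β, hα, hαβ, hneg, l, hl0, hl, hlD⟩ :=
    G.exists_sqDistMatrix_condNegSemidef_of_exists_lt
      (G.exists_sum_eq_zero_dotProduct_adjMatrix_mulVec_lt huv hvw huw hnuw)
  obtain ⟨m, p, hp⟩ := exists_dist_sq_eq_sqDistMatrix G hneg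
  have hdep : ¬AffineIndependent ℝ p := fun h =>
    hl0 ((affineIndependent_iff_of_dist_sq_eq hp).mp h l hl hlD)
  have hn : Fintype.card (Fin n) = n - 2 + 2 := by
    have := Fin.val_ne_of_ne huw
    simp only [Fintype.card_fin]
    omega
  exact hasTwoDistRep_of_dist_sq_eq G hα hαβ hp
    ((finrank_vectorSpan_le_iff_not_affineIndependent ℝ p hn).mpr hdep)

theorem card_le_of_hasTwoDistRep (htrans : ∀ u v w, G.Adj u v → G.Adj v w → u ≠ w → G.Adj u w)
    {d : ℕ} (h : HasTwoDistRep G d) : n ≤ d + 1 := by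
  obtain ⟨α, β, hα, hαβ, f, hf⟩ := (hasTwoDistRep_iff G).mp h
  suffices hf : AffineIndependent ℝ f by
    have hcard := hf.card_le_finrank_succ
    have hdim := (vectorSpan ℝ (Set.range f)).finrank_le
    rw [Fintype.card_fin] at hcard
    rw [finrank_euclideanSpace_fin] at hdim
    omega
  refine (affineIndependent_iff_of_dist_sq_eq hf).mpr fun x hx hxD => ?_
  rw [dotProduct_sqDistMatrix_mulVec G _ _ hx] at hxD
  have hE := (G.posSemidef_adjMatrix_add_one htrans).dotProduct_mulVec_nonneg x
  simp only [star_trivial, add_mulVec, one_mulVec, dotProduct_add] at hE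
  -- `α xᵀx = (α - β) xᵀ(A + 1)x ≤ 0`
  have hxx : x ⬝ᵥ x ≤ 0 := by nlinarith
  exact dotProduct_self_eq_zero.mp
    (hxx.antisymm (Finset.sum_nonneg fun i _ => mul_self_nonneg (x i)))

end TwoDistance

/-- Einhorn–Schoenberg: `dim₂(G) = n − 1` if and only if `G` is a disjoint
union of cliques (i.e. adjacency is transitive on distinct vertices). -/
theorem einhorn_schoenberg {n : ℕ} (G : SimpleGraph (Fin n)) [DecidableRel G.Adj] :
    dimTwo G = n - 1 ↔
      ∀ u v w : Fin n, G.Adj u v → G.Adj v w → u ≠ w → G.Adj u w := by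
  constructor
  · intro h u v w huv hvw huw
    by_contra hnuw
    have hle : dimTwo G ≤ n - 2 := Nat.sInf_le (hasTwoDistRep_sub_two G huv hvw huw hnuw)
    have := Fin.val_ne_of_ne huv.ne
    omega
  · intro htrans
    refine le_antisymm (Nat.sInf_le (hasTwoDistRep_sub_one G)) ?_
    exact le_csInf ⟨_, hasTwoDistRep_sub_one G⟩ fun d hd => by
      have := card_le_of_hasTwoDistRep G htrans hd
      omega
end

section
/- A two-distance set in ℝ^d has at most (d+1)(d+2)/2 points. -/
/-!
Let the distances be `a, b ≠ 0` (a zero distance never occurs between distinct points)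
and put `F_p x = (‖x - p‖² - a²)(‖x - p‖² - b²)`, so that `F_p q = a²b² δ_pq` on `S`.
If `∑ μ_p F_p` is an affine function `⟪u, ·⟫ + r`, then along every line `t ↦ t • y` the
fourth and third finite differences, which kill affine functions, read off the `t⁴` and `t³`
coefficients `24 ‖y‖⁴ ∑ μ_p` and `-48 ‖y‖² ⟪y, ∑ μ_p p⟫`; hence `∑ μ_p = 0` and
`∑ μ_p p = 0`. Evaluating at `q ∈ S` and summing against `μ` then gives `a²b² ∑ μ_q² = 0`.
So the `F_p` and the `d + 1` affine functions `x ↦ xₖ, 1` are linearly independent; they all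
lie in the span of `‖x‖⁴, ‖x‖² xₖ, xₖ xₗ, xₖ, 1`, of dimension `(d+1)(d+2)/2 + d + 1`.
-/

open Finset RealInnerProductSpace

section
variable {X : Type*} [PseudoMetricSpace X]

noncomputable def twoDistancePoly (a b : ℝ) (p x : X) : ℝ :=
  (dist x p ^ 2 - a ^ 2) * (dist x p ^ 2 - b ^ 2)

lemma twoDistancePoly_self (a b : ℝ) (p : X) : twoDistancePoly a b p p = a ^ 2 * b ^ 2 := by
  simp [twoDistancePoly]

lemma twoDistancePoly_eq_zero {a b : ℝ} {p x : X} (h : dist x p = a ∨ dist x p = b) :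
    twoDistancePoly a b p x = 0 := by
  rcases h with h | h <;> simp [twoDistancePoly, h]

end

lemma Set.Pairwise.exists_ne_zero_dist_eq_or_eq {X : Type*} [MetricSpace X] {s : Set X}
    {a b : ℝ} (h : s.Pairwise fun x y => dist x y = a ∨ dist x y = b) :
    ∃ a' b' : ℝ, a' ≠ 0 ∧ b' ≠ 0 ∧
      s.Pairwise fun x y => dist x y = a' ∨ dist x y = b' := by
  refine ⟨if a = 0 then 1 else a, if b = 0 then 1 else b, by split_ifs <;> simp [*],
    by split_ifs <;> simp [*], fun x hx y hy hxy => ?_⟩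
  have hpos := (dist_pos.2 hxy).ne'
  exact (h hx hy hxy).imp (fun hd => by rwa [if_neg (hd ▸ hpos)])
    (fun hd => by rwa [if_neg (hd ▸ hpos)])

variable {E : Type*} [NormedAddCommGroup E] [InnerProductSpace ℝ E]

lemma dist_smul_sq (t : ℝ) (y p : E) :
    dist (t • y) p ^ 2 = t ^ 2 * ‖y‖ ^ 2 - 2 * t * ⟪y, p⟫ + ‖p‖ ^ 2 := by
  rw [dist_eq_norm, norm_sub_sq_real, norm_smul, real_inner_smul_left, mul_pow, Real.norm_eq_abs,
    sq_abs]
  ring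

lemma sum_mul_inner_add_eq_zero {ι : Type*} {s : Finset ι} {w : ι → ℝ} {x : ι → E}
    (hw : ∑ i ∈ s, w i = 0) (hwx : ∑ i ∈ s, w i • x i = 0) (u : E) (r : ℝ) :
    ∑ i ∈ s, w i * (⟪u, x i⟫ + r) = 0 := by
  simp only [mul_add, sum_add_distrib, ← sum_mul, hw, zero_mul, add_zero]
  simpa [inner_sum, inner_smul_right, mul_comm] using congrArg (⟪u, ·⟫) hwx

lemma fourth_difference_twoDistancePoly (a b : ℝ) (y p : E) :
    ∑ k : Fin 5,
      ![(1 : ℝ), -4, 6, -4, 1] k * twoDistancePoly a b p (![(2 : ℝ), 1, 0, -1, -2] k • y)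
      = 24 * ‖y‖ ^ 4 := by
  simp [Fin.sum_univ_five, twoDistancePoly, dist_smul_sq]
  ring

lemma third_difference_twoDistancePoly (a b : ℝ) (y p : E) :
    ∑ k : Fin 4,
      ![(1 : ℝ), -2, 2, -1] k * twoDistancePoly a b p (![(2 : ℝ), 1, -1, -2] k • y)
      = -48 * ‖y‖ ^ 2 * ⟪y, p⟫ := by
  simp [Fin.sum_univ_four, twoDistancePoly, dist_smul_sq]
  ring

section
variable {ι : Type*} [Fintype ι] {a b : ℝ} {p : ι → E} {μ : ι → ℝ} {u : E} {r : ℝ}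

lemma sum_mul_sum_twoDistancePoly_eq_zero
    (hf : ∀ x, ∑ i, μ i * twoDistancePoly a b (p i) x = ⟪u, x⟫ + r)
    {κ : Type*} {s : Finset κ} {w : κ → ℝ} {x : κ → E}
    (hw : ∑ k ∈ s, w k = 0) (hwx : ∑ k ∈ s, w k • x k = 0) :
    ∑ i, μ i * ∑ k ∈ s, w k * twoDistancePoly a b (p i) (x k) = 0 := by
  simp_rw [mul_sum]
  rw [sum_comm]
  simp_rw [mul_left_comm (μ _), ← mul_sum, hf]
  exact sum_mul_inner_add_eq_zero hw hwx u r

lemma sum_eq_zero_of_sum_twoDistancePoly_eq [Nontrivial E]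
    (hf : ∀ x, ∑ i, μ i * twoDistancePoly a b (p i) x = ⟪u, x⟫ + r) :
    ∑ i, μ i = 0 := by
  obtain ⟨y, hy⟩ := exists_ne (0 : E)
  have h := sum_mul_sum_twoDistancePoly_eq_zero hf (s := univ) (w := ![1, -4, 6, -4, 1])
    (x := fun k => ![(2 : ℝ), 1, 0, -1, -2] k • y) (by simp [Fin.sum_univ_five]; norm_num)
    (by simp [Fin.sum_univ_five, smul_smul])
  simp_rw [fourth_difference_twoDistancePoly, ← sum_mul] at h
  exact (mul_eq_zero.mp h).resolve_right (by positivity)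

lemma sum_smul_eq_zero_of_sum_twoDistancePoly_eq
    (hf : ∀ x, ∑ i, μ i * twoDistancePoly a b (p i) x = ⟪u, x⟫ + r) :
    ∑ i, μ i • p i = 0 := by
  generalize hm : ∑ i, μ i • p i = m
  have h := sum_mul_sum_twoDistancePoly_eq_zero hf (s := univ) (w := ![1, -2, 2, -1])
    (x := fun k => ![(2 : ℝ), 1, -1, -2] k • m) (by simp [Fin.sum_univ_four])
    (by simp [Fin.sum_univ_four, smul_smul])
  have hnorm : ⟪m, m⟫ = ∑ i, μ i * ⟪m, p i⟫ := by
    nth_rw 2 [← hm]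
    simp [inner_sum, inner_smul_right]
  simp_rw [third_difference_twoDistancePoly, mul_left_comm (μ _), ← mul_sum, ← hnorm,
    real_inner_self_eq_norm_sq] at h
  simpa using h

theorem eq_zero_of_sum_twoDistancePoly_eq [Nontrivial E] (ha : a ≠ 0) (hb : b ≠ 0)
    (hp : Pairwise fun i j => dist (p i) (p j) = a ∨ dist (p i) (p j) = b)
    (hf : ∀ x, ∑ i, μ i * twoDistancePoly a b (p i) x = ⟪u, x⟫ + r) :
    μ = 0 := by
  have heval : ∀ j, μ j * (a ^ 2 * b ^ 2) = ⟪u, p j⟫ + r := fun j => by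
    rw [← hf, Fintype.sum_eq_single j fun i hij => by rw [twoDistancePoly_eq_zero (hp hij.symm),
      mul_zero], twoDistancePoly_self]
  have h : ∑ j, μ j * μ j * (a ^ 2 * b ^ 2) = 0 := by
    simp_rw [mul_assoc, heval]
    exact sum_mul_inner_add_eq_zero (sum_eq_zero_of_sum_twoDistancePoly_eq hf)
      (sum_smul_eq_zero_of_sum_twoDistancePoly_eq hf) u r
  rw [← sum_mul, mul_eq_zero, sum_mul_self_eq_zero_iff] at h
  exact funext fun j => (h.resolve_right (by positivity)) j (mem_univ j)

end

section
variable {κ : Type*} [Fintype κ] (e : OrthonormalBasis κ ℝ E)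

noncomputable def quarticMonomial : Unit ⊕ κ ⊕ Sym2 κ ⊕ κ ⊕ Unit → E → ℝ :=
  Sum.elim (fun _ x => ‖x‖ ^ 4) <|
  Sum.elim (fun k x => ‖x‖ ^ 2 * ⟪e k, x⟫) <|
  Sum.elim (fun z x => Sym2.lift ⟨fun k l => ⟪e k, x⟫ * ⟪e l, x⟫, fun _ _ => mul_comm _ _⟩ z) <|
  Sum.elim (fun k x => ⟪e k, x⟫) fun _ _ => 1

noncomputable def quarticSpace : Submodule ℝ (E → ℝ) :=
  Submodule.span ℝ (Set.range (quarticMonomial e))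

lemma finrank_quarticSpace_le :
    Module.finrank ℝ (quarticSpace e) ≤
      1 + (Fintype.card κ + ((Fintype.card κ + 1).choose 2 + (Fintype.card κ + 1))) :=
  (finrank_range_le_card (R := ℝ) (quarticMonomial e)).trans_eq
    (by simp [Fintype.card_sum, Sym2.card])

lemma quarticMonomial_mem (m : Unit ⊕ κ ⊕ Sym2 κ ⊕ κ ⊕ Unit) :
    quarticMonomial e m ∈ quarticSpace e :=
  Submodule.subset_span ⟨m, rfl⟩

lemma inner_mul_inner_mem_quarticSpace (v w : E) :
    (fun x => ⟪v, x⟫ * ⟪w, x⟫) ∈ quarticSpace e := by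
  have : (fun x => ⟪v, x⟫ * ⟪w, x⟫) = ∑ k, ∑ l,
      (⟪v, e k⟫ * ⟪w, e l⟫) • quarticMonomial e (.inr (.inr (.inl s(k, l)))) := by
    ext x
    simp only [Finset.sum_apply, Pi.smul_apply, smul_eq_mul, quarticMonomial, Sum.elim_inr,
      Sum.elim_inl, Sym2.lift_mk]
    rw [← e.sum_inner_mul_inner v x, ← e.sum_inner_mul_inner w x, sum_mul_sum]
    exact sum_congr rfl fun k _ => sum_congr rfl fun l _ => by ring
  rw [this]
  exact Submodule.sum_mem _ fun k _ => Submodule.sum_mem _ fun l _ =>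
    Submodule.smul_mem _ _ (quarticMonomial_mem e _)

lemma norm_sq_mul_inner_mem_quarticSpace (v : E) :
    (fun x => ‖x‖ ^ 2 * ⟪v, x⟫) ∈ quarticSpace e := by
  have : (fun x => ‖x‖ ^ 2 * ⟪v, x⟫) =
      ∑ k, ⟪v, e k⟫ • quarticMonomial e (.inr (.inl k)) := by
    ext x
    simp only [Finset.sum_apply, Pi.smul_apply, smul_eq_mul, quarticMonomial, Sum.elim_inr,
      Sum.elim_inl]
    rw [← e.sum_inner_mul_inner v x, mul_sum]
    exact sum_congr rfl fun k _ => by ring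
  rw [this]
  exact Submodule.sum_mem _ fun k _ => Submodule.smul_mem _ _ (quarticMonomial_mem e _)

lemma inner_mem_quarticSpace (v : E) : (fun x => ⟪v, x⟫) ∈ quarticSpace e := by
  have : (fun x => ⟪v, x⟫) =
      ∑ k, ⟪v, e k⟫ • quarticMonomial e (.inr (.inr (.inr (.inl k)))) := by
    ext x
    simp [quarticMonomial, e.sum_inner_mul_inner]
  rw [this]
  exact Submodule.sum_mem _ fun k _ => Submodule.smul_mem _ _ (quarticMonomial_mem e _)

lemma norm_sq_mem_quarticSpace : (fun x : E => ‖x‖ ^ 2) ∈ quarticSpace e := by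
  have : (fun x : E => ‖x‖ ^ 2) = ∑ k, fun x => ⟪e k, x⟫ * ⟪e k, x⟫ := by
    ext x
    rw [← real_inner_self_eq_norm_sq, ← e.sum_inner_mul_inner x x, Finset.sum_apply]
    simp only [real_inner_comm x]
  rw [this]
  exact Submodule.sum_mem _ fun k _ => inner_mul_inner_mem_quarticSpace e _ _

lemma twoDistancePoly_mem_quarticSpace (a b : ℝ) (p : E) :
    twoDistancePoly a b p ∈ quarticSpace e := by
  set α := ‖p‖ ^ 2 - a ^ 2
  set β := ‖p‖ ^ 2 - b ^ 2
  have : twoDistancePoly a b p = quarticMonomial e (.inl ())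
      + (-4 : ℝ) • (fun x => ‖x‖ ^ 2 * ⟪p, x⟫)
      + (4 : ℝ) • (fun x => ⟪p, x⟫ * ⟪p, x⟫)
      + (α + β) • (fun x => ‖x‖ ^ 2) + (-2 * (α + β)) • (fun x => ⟪p, x⟫)
      + (α * β) • quarticMonomial e (.inr (.inr (.inr (.inr ())))) := by
    ext x
    simp only [twoDistancePoly, quarticMonomial, dist_eq_norm, norm_sub_sq_real, Pi.add_apply,
      Pi.smul_apply, smul_eq_mul, Sum.elim_inl, Sum.elim_inr, real_inner_comm x p, α, β]
    ring
  rw [this]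
  refine add_mem (add_mem (add_mem (add_mem (add_mem ?_ ?_) ?_) ?_) ?_) ?_
  · exact quarticMonomial_mem e _
  · exact Submodule.smul_mem _ _ (norm_sq_mul_inner_mem_quarticSpace e p)
  · exact Submodule.smul_mem _ _ (inner_mul_inner_mem_quarticSpace e p p)
  · exact Submodule.smul_mem _ _ (norm_sq_mem_quarticSpace e)
  · exact Submodule.smul_mem _ _ (inner_mem_quarticSpace e p)
  · exact Submodule.smul_mem _ _ (quarticMonomial_mem e _)

instance : FiniteDimensional ℝ (quarticSpace e) :=
  FiniteDimensional.span_of_finite ℝ (Set.finite_range _)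

variable {ι : Type*} [Fintype ι] {a b : ℝ} {p : ι → E}

theorem linearIndependent_twoDistancePoly_inner_one [Nontrivial E] (ha : a ≠ 0) (hb : b ≠ 0)
    (hp : Pairwise fun i j => dist (p i) (p j) = a ∨ dist (p i) (p j) = b) :
    LinearIndependent ℝ (Sum.elim (fun i => twoDistancePoly a b (p i))
      (Sum.elim (fun k x => ⟪e k, x⟫) fun _ : Unit => 1)) := by
  classical
  rw [Fintype.linearIndependent_iff]
  intro g hg
  have hx : ∀ x, ∑ i, g (.inl i) * twoDistancePoly a b (p i) x
      + (∑ k, g (.inr (.inl k)) * ⟪e k, x⟫ + g (.inr (.inr ()))) = 0 := fun x => by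
    simpa [Fintype.sum_sum_type] using congrFun hg x
  have hpoly : (fun i => g (.inl i)) = 0 := by
    refine eq_zero_of_sum_twoDistancePoly_eq ha hb hp (u := -∑ k, g (.inr (.inl k)) • e k)
      (r := -g (.inr (.inr ()))) fun x => ?_
    simp only [inner_neg_left, sum_inner, inner_smul_left, conj_trivial]
    linarith [hx x]
  have haff : ∀ x, ∑ k, g (.inr (.inl k)) * ⟪e k, x⟫ + g (.inr (.inr ())) = 0 := fun x => by
    simpa [show ∀ i, g (.inl i) = 0 from congrFun hpoly] using hx x
  have hone : g (.inr (.inr ())) = 0 := by simpa using haff 0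
  rintro (i | k | ⟨⟩)
  · exact congrFun hpoly i
  · simpa [hone, e.inner_eq_ite] using haff (e k)
  · exact hone

end

theorem Fintype.card_le_choose_of_pairwise_dist [FiniteDimensional ℝ E] [Nontrivial E]
    {ι : Type*} [Fintype ι] {a b : ℝ} {p : ι → E} (ha : a ≠ 0) (hb : b ≠ 0)
    (hp : Pairwise fun i j => dist (p i) (p j) = a ∨ dist (p i) (p j) = b) :
    Fintype.card ι ≤ (Module.finrank ℝ E + 2).choose 2 := by
  set e := stdOrthonormalBasis ℝ E
  have hle : Submodule.span ℝ (Set.range (Sum.elim (fun i => twoDistancePoly a b (p i))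
      (Sum.elim (fun k x => ⟪e k, x⟫) fun _ : Unit => 1))) ≤ quarticSpace e := by
    refine Submodule.span_le.2 (Set.range_subset_iff.2 ?_)
    rintro (i | k | ⟨⟩)
    · exact twoDistancePoly_mem_quarticSpace e a b (p i)
    · exact inner_mem_quarticSpace e (e k)
    · exact quarticMonomial_mem e (.inr (.inr (.inr (.inr ()))))
  have hcard := calc Fintype.card (ι ⊕ Fin (Module.finrank ℝ E) ⊕ Unit)
      _ = Module.finrank ℝ _ :=
        (finrank_span_eq_card (linearIndependent_twoDistancePoly_inner_one e ha hb hp)).symm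
      _ ≤ Module.finrank ℝ (quarticSpace e) := Submodule.finrank_mono hle
      _ ≤ _ := finrank_quarticSpace_le e
  simp only [Fintype.card_sum, Fintype.card_fin, Fintype.card_unit] at hcard
  have hchoose : (Module.finrank ℝ E + 2).choose 2
      = (Module.finrank ℝ E + 1).choose 2 + (Module.finrank ℝ E + 1) := by
    rw [Nat.choose_succ_succ', Nat.choose_one_right, add_comm]
  omega

theorem Finset.card_le_choose_of_pairwise_dist [FiniteDimensional ℝ E] {S : Finset E} {a b : ℝ}
    (h : (S : Set E).Pairwise fun x y => dist x y = a ∨ dist x y = b) :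
    S.card ≤ (Module.finrank ℝ E + 2).choose 2 := by
  rcases subsingleton_or_nontrivial E with hE | hE
  · exact (card_le_one_of_subsingleton S).trans (Nat.choose_pos (by omega))
  obtain ⟨a', b', ha', hb', h'⟩ := h.exists_ne_zero_dist_eq_or_eq
  simpa using Fintype.card_le_choose_of_pairwise_dist ha' hb' (p := ((↑) : S → E))
    fun i j hij => h' i.2 j.2 (Subtype.coe_injective.ne hij)

/-- A two-distance set in ℝ^d (a finite set whose pairwise distances between
distinct points take at most two values) has at most `(d+1)(d+2)/2` points. -/
theorem two_distance_set_bound (d : ℕ) (S : Finset (EuclideanSpace ℝ (Fin d)))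
    (a b : ℝ)
    (h : ∀ x ∈ S, ∀ y ∈ S, x ≠ y → dist x y = a ∨ dist x y = b) :
    S.card ≤ (d + 1) * (d + 2) / 2 := by
  have := S.card_le_choose_of_pairwise_dist fun x hx y hy hxy => h x hx y hy hxy
  rwa [finrank_euclideanSpace_fin, Nat.choose_two_right, mul_comm] at this
end

section
/- A spherical two-distance set in S^{d−1} has at most d(d+3)/2 points. -/
open scoped RealInnerProductSpace

private theorem two_dist_aux (d : ℕ)
    (S : Finset (EuclideanSpace ℝ (Fin d))) (hS : ∀ x ∈ S, ‖x‖ = 1)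
    (t₁ t₂ : ℝ) (h1 : t₁ ≠ 1) (h2 : t₂ ≠ 1)
    (h : ∀ x ∈ S, ∀ y ∈ S, x ≠ y → ⟪x, y⟫ = t₁ ∨ ⟪x, y⟫ = t₂) :
    S.card ≤ d * (d + 3) / 2 := by
  classical
  have hinner : ∀ x y : EuclideanSpace ℝ (Fin d), ⟪x, y⟫ = ∑ i, x i * y i := by
    intro x y
    simp [PiLp.inner_apply, RCLike.inner_apply, starRingEnd_apply, star_trivial]
    exact Finset.sum_congr rfl fun i _ => mul_comm _ _
  have hsq : ∀ x ∈ S, ∑ i, x i * x i = 1 := by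
    intro x hx
    have := real_inner_self_eq_norm_sq x
    rw [hS x hx] at this
    rw [hinner, one_pow] at this
    exact this
  set f : ↥S → (↥S → ℝ) := fun p x =>
    (⟪(x : EuclideanSpace ℝ (Fin d)), (p : EuclideanSpace ℝ (Fin d))⟫ - t₁) *
      (⟪(x : EuclideanSpace ℝ (Fin d)), (p : EuclideanSpace ℝ (Fin d))⟫ - t₂) with hf
  have hfapp : ∀ p x : ↥S, f p x =
      (⟪(x : EuclideanSpace ℝ (Fin d)), (p : EuclideanSpace ℝ (Fin d))⟫ - t₁) *
        (⟪(x : EuclideanSpace ℝ (Fin d)), (p : EuclideanSpace ℝ (Fin d))⟫ - t₂) :=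
    fun p x => rfl
  have hfself : ∀ p : ↥S, f p p = (1 - t₁) * (1 - t₂) := by
    intro p
    have hpp : ⟪(p : EuclideanSpace ℝ (Fin d)), (p : EuclideanSpace ℝ (Fin d))⟫ = 1 := by
      rw [hinner]; exact hsq p p.2
    rw [hfapp, hpp]
  have hfzero : ∀ p q : ↥S, q ≠ p → f p q = 0 := by
    intro p q hqp
    have hne : (q : EuclideanSpace ℝ (Fin d)) ≠ (p : EuclideanSpace ℝ (Fin d)) :=
      fun hc => hqp (Subtype.ext hc)
    rcases h q q.2 p p.2 hne with hv | hv <;> rw [hfapp, hv] <;> ring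
  have hc : (1 - t₁) * (1 - t₂) ≠ 0 :=
    mul_ne_zero (sub_ne_zero.mpr (Ne.symm h1)) (sub_ne_zero.mpr (Ne.symm h2))
  have li : LinearIndependent ℝ f := by
    rw [Fintype.linearIndependent_iff]
    intro g hg p
    have hp := congrFun hg p
    simp only [Finset.sum_apply, Pi.smul_apply, smul_eq_mul, Pi.zero_apply] at hp
    rw [Finset.sum_eq_single_of_mem p (Finset.mem_univ p)
      (fun q _ hq => by rw [hfzero q p (Ne.symm hq), mul_zero])] at hp
    rw [hfself p] at hp
    exact (mul_eq_zero.mp hp).resolve_right hc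
  set G : (Sym2 (Fin d) ⊕ Fin d) → (↥S → ℝ) := fun k x =>
    Sum.elim
      (fun s => Sym2.lift
        ⟨fun i j => (x : EuclideanSpace ℝ (Fin d)) i * (x : EuclideanSpace ℝ (Fin d)) j,
          fun i j => mul_comm _ _⟩ s)
      (fun i => (x : EuclideanSpace ℝ (Fin d)) i) k with hG
  set W := Submodule.span ℝ (Set.range G) with hW
  have hGmul : ∀ i j : Fin d,
      (fun x : ↥S => (x : EuclideanSpace ℝ (Fin d)) i * (x : EuclideanSpace ℝ (Fin d)) j) ∈ W := by
    intro i j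
    exact Submodule.subset_span ⟨Sum.inl s(i, j), by funext x; simp [hG]⟩
  have hGlin : ∀ i : Fin d, (fun x : ↥S => (x : EuclideanSpace ℝ (Fin d)) i) ∈ W :=
    fun i => Submodule.subset_span ⟨Sum.inr i, rfl⟩
  have hone : (fun _ : ↥S => (1 : ℝ)) ∈ W := by
    have heq : (fun _ : ↥S => (1 : ℝ)) =
        ∑ i : Fin d, (fun x : ↥S =>
          (x : EuclideanSpace ℝ (Fin d)) i * (x : EuclideanSpace ℝ (Fin d)) i) := by
      funext x
      rw [Finset.sum_apply]
      exact (hsq x x.2).symm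
    rw [heq]
    exact Submodule.sum_mem _ fun i _ => hGmul i i
  have hmem : ∀ p : ↥S, f p ∈ W := by
    intro p
    have expand : f p =
        (∑ i : Fin d, ∑ j : Fin d,
          ((p : EuclideanSpace ℝ (Fin d)) i * (p : EuclideanSpace ℝ (Fin d)) j) •
            (fun x : ↥S =>
              (x : EuclideanSpace ℝ (Fin d)) i * (x : EuclideanSpace ℝ (Fin d)) j))
        + (-(t₁ + t₂)) • (∑ i : Fin d,
            (p : EuclideanSpace ℝ (Fin d)) i •
              (fun x : ↥S => (x : EuclideanSpace ℝ (Fin d)) i))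
        + (t₁ * t₂) • (fun _ : ↥S => (1 : ℝ)) := by
      funext x
      have hdouble : ∀ i : Fin d, (∑ j : Fin d,
          ((p : EuclideanSpace ℝ (Fin d)) i * (p : EuclideanSpace ℝ (Fin d)) j) *
            ((x : EuclideanSpace ℝ (Fin d)) i * (x : EuclideanSpace ℝ (Fin d)) j))
          = ((x : EuclideanSpace ℝ (Fin d)) i * (p : EuclideanSpace ℝ (Fin d)) i) *
              ∑ j : Fin d,
                (x : EuclideanSpace ℝ (Fin d)) j * (p : EuclideanSpace ℝ (Fin d)) j := by
        intro i
        rw [Finset.mul_sum]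
        exact Finset.sum_congr rfl fun j _ => by ring
      rw [hfapp, hinner]
      simp only [Pi.add_apply, Pi.smul_apply, Finset.sum_apply, smul_eq_mul]
      rw [Finset.sum_congr rfl fun i _ => hdouble i, ← Finset.sum_mul,
        Finset.sum_congr rfl fun i (_ : i ∈ Finset.univ) =>
          mul_comm ((p : EuclideanSpace ℝ (Fin d)) i) ((x : EuclideanSpace ℝ (Fin d)) i)]
      ring
    rw [expand]
    refine Submodule.add_mem _ (Submodule.add_mem _ ?_ ?_) ?_
    · exact Submodule.sum_mem _ fun i _ =>
        Submodule.sum_mem _ fun j _ => Submodule.smul_mem _ _ (hGmul i j)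
    · exact Submodule.smul_mem _ _
        (Submodule.sum_mem _ fun i _ => Submodule.smul_mem _ _ (hGlin i))
    · exact Submodule.smul_mem _ _ hone
  have hspan_le : Submodule.span ℝ (Set.range f) ≤ W :=
    Submodule.span_le.mpr (Set.range_subset_iff.mpr hmem)
  have hcard1 : Fintype.card ↥S ≤ Module.finrank ℝ (Submodule.span ℝ (Set.range f)) :=
    linearIndependent_iff_card_le_finrank_span.mp li
  have hcard2 : Module.finrank ℝ (Submodule.span ℝ (Set.range f)) ≤ Module.finrank ℝ W :=
    Submodule.finrank_mono hspan_le
  have hcard3 : Module.finrank ℝ W ≤ Fintype.card (Sym2 (Fin d) ⊕ Fin d) :=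
    finrank_range_le_card G
  have hι : Fintype.card (Sym2 (Fin d) ⊕ Fin d) = d * (d + 3) / 2 := by
    rw [Fintype.card_sum, Sym2.card, Fintype.card_fin, Nat.choose_two_right]
    have e1 : (d + 1) * (d + 1 - 1) = d * (d + 1) := by
      simp [Nat.mul_comm]
    have e2 : d * (d + 3) = d * (d + 1) + d * 2 := by ring
    rw [e1, e2, Nat.add_mul_div_right _ _ (by norm_num : (0:ℕ) < 2)]
  have hcS : S.card = Fintype.card ↥S := (Fintype.card_coe S).symm
  omega

/-- A spherical two-distance set in S^{d−1} (unit vectors whose pairwise inner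
products between distinct points take at most two values) has at most
`d(d+3)/2` points. -/
theorem spherical_two_distance_set_bound (d : ℕ)
    (S : Finset (EuclideanSpace ℝ (Fin d))) (hS : ∀ x ∈ S, ‖x‖ = 1)
    (t₁ t₂ : ℝ)
    (h : ∀ x ∈ S, ∀ y ∈ S, x ≠ y → ⟪x, y⟫ = t₁ ∨ ⟪x, y⟫ = t₂) :
    S.card ≤ d * (d + 3) / 2 := by
  have hstrict : ∀ x ∈ S, ∀ y ∈ S, x ≠ y → ⟪x, y⟫ ≠ 1 := by
    intro x hx y hy hne
    exact ne_of_lt ((inner_lt_one_iff_real_of_norm_eq_one (hS x hx) (hS y hy)).mpr hne)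
  by_cases h1 : t₁ = 1
  · by_cases h2 : t₂ = 1
    · have hcard : S.card ≤ 1 := by
        rw [Finset.card_le_one]
        intro a ha b hb
        by_contra hab
        rcases h a ha b hb hab with hv | hv
        · exact hstrict a ha b hb hab (hv.trans h1)
        · exact hstrict a ha b hb hab (hv.trans h2)
      rcases Nat.eq_zero_or_pos S.card with h0 | hpos
      · omega
      · obtain ⟨x, hx⟩ := Finset.card_pos.mp hpos
        have hd : 1 ≤ d := by
          rcases Nat.eq_zero_or_pos d with rfl | hd
          · have hx0 : x = 0 := by ext i; exact i.elim0
            have hn := hS x hx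
            rw [hx0, norm_zero] at hn
            norm_num at hn
          · exact hd
        have : 2 ≤ d * (d + 3) := by nlinarith
        omega
    · refine two_dist_aux d S hS t₂ t₂ h2 h2 ?_
      intro x hx y hy hne
      left
      rcases h x hx y hy hne with hv | hv
      · exact absurd (hv.trans h1) (hstrict x hx y hy hne)
      · exact hv
  · by_cases h2 : t₂ = 1
    · refine two_dist_aux d S hS t₁ t₁ h1 h1 ?_
      intro x hx y hy hne
      left
      rcases h x hx y hy hne with hv | hv
      · exact hv
      · exact absurd (hv.trans h2) (hstrict x hx y hy hne)
    · exact two_dist_aux d S hS t₁ t₂ h1 h2 h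
end

section
/- Any set of unit vectors in ℝⁿ with pairwise inner products at most 0 has cardinality at most 2n. -/
/-!
Choose a vector `u` orthogonal to none of the `x i` (a real vector space is not a finite union
of proper subspaces). The vectors with `⟪x i, u⟫ > 0` are linearly independent: if a linear
relation among them is split into its positive and negative parts, both parts equal the same
vector `z`, and pairwise nonpositivity gives `‖z‖² ≤ 0`; pairing `z = 0` with `u` then kills
all coefficients. The same holds for `⟪x i, u⟫ < 0`, so there are at most `2n` vectors.
-/

open scoped RealInnerProductSpace
open Module Finset

variable {E : Type*} [NormedAddCommGroup E] [InnerProductSpace ℝ E] {ι : Type*}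

theorem exists_forall_inner_ne_zero [Finite ι] {v : ι → E} (hv : ∀ i, v i ≠ 0) :
    ∃ u : E, ∀ i, ⟪v i, u⟫ ≠ 0 := by
  by_contra! hcover
  obtain ⟨i, hi⟩ := Subspace.exists_eq_top_of_iUnion_eq_univ (p := fun i => (ℝ ∙ v i)ᗮ)
    (Set.eq_univ_of_forall fun u => by
      obtain ⟨i, hi⟩ := hcover u
      exact Set.mem_iUnion.mpr ⟨i, Submodule.mem_orthogonal_singleton_iff_inner_right.mpr hi⟩)
  rw [Submodule.orthogonal_eq_top_iff, Submodule.span_singleton_eq_bot] at hi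
  exact hv i hi

theorem inner_sum_smul_sum_smul_nonpos {v : ι → E} (h : Pairwise fun i j => ⟪v i, v j⟫ ≤ 0)
    {s t : Finset ι} (hst : Disjoint s t) {a b : ι → ℝ} (ha : ∀ i ∈ s, 0 ≤ a i)
    (hb : ∀ j ∈ t, 0 ≤ b j) :
    ⟪∑ i ∈ s, a i • v i, ∑ j ∈ t, b j • v j⟫ ≤ 0 := by
  rw [sum_inner]
  refine sum_nonpos fun i hi => ?_
  rw [inner_sum]
  refine sum_nonpos fun j hj => ?_
  rw [real_inner_smul_left, real_inner_smul_right]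
  exact mul_nonpos_of_nonneg_of_nonpos (ha i hi)
    (mul_nonpos_of_nonneg_of_nonpos (hb j hj) (h fun hij => disjoint_left.mp hst hi (hij ▸ hj)))

theorem eq_zero_of_sum_smul_eq_zero_of_inner_pos {v : ι → E} {u : E} {s : Finset ι}
    (hu : ∀ i ∈ s, 0 < ⟪v i, u⟫) {a : ι → ℝ} (ha : ∀ i ∈ s, 0 ≤ a i)
    (hsum : ∑ i ∈ s, a i • v i = 0) : ∀ i ∈ s, a i = 0 := by
  have hterms : ∑ i ∈ s, a i * ⟪v i, u⟫ = 0 := by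
    simpa only [sum_inner, real_inner_smul_left, inner_zero_left] using congrArg (⟪·, u⟫) hsum
  intro i hi
  have := (sum_eq_zero_iff_of_nonneg fun j hj => mul_nonneg (ha j hj) (hu j hj).le).mp hterms i hi
  exact (mul_eq_zero.mp this).resolve_right (hu i hi).ne'

theorem linearIndependent_of_pairwise_inner_nonpos {v : ι → E} (u : E)
    (hu : ∀ i, 0 < ⟪v i, u⟫) (h : Pairwise fun i j => ⟪v i, v j⟫ ≤ 0) :
    LinearIndependent ℝ v := by
  classical
  rw [linearIndependent_iff']
  intro s g hg i hi
  set P := s.filter (0 < g ·)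
  set Q := s.filter (¬0 < g ·)
  have hPQ : ∑ j ∈ P, g j • v j = ∑ j ∈ Q, (-g j) • v j := by
    simp only [neg_smul, sum_neg_distrib, eq_neg_iff_add_eq_zero]
    rwa [sum_filter_add_sum_filter_not]
  have hP : ∀ j ∈ P, 0 ≤ g j := fun j hj => (mem_filter.mp hj).2.le
  have hQ : ∀ j ∈ Q, 0 ≤ -g j := fun j hj => neg_nonneg.mpr (not_lt.mp (mem_filter.mp hj).2)
  have hzero : ∑ j ∈ P, g j • v j = 0 := by
    rw [← real_inner_self_nonpos]
    nth_rewrite 2 [hPQ]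
    exact inner_sum_smul_sum_smul_nonpos h (disjoint_filter_filter_not s s _) hP hQ
  by_cases hgi : 0 < g i
  · exact eq_zero_of_sum_smul_eq_zero_of_inner_pos (fun j _ => hu j) hP hzero i
      (mem_filter.mpr ⟨hi, hgi⟩)
  · exact neg_eq_zero.mp <| eq_zero_of_sum_smul_eq_zero_of_inner_pos (fun j _ => hu j) hQ
      (hPQ ▸ hzero) i (mem_filter.mpr ⟨hi, hgi⟩)

theorem card_le_two_mul_finrank_of_pairwise_inner_nonpos [FiniteDimensional ℝ E] [Fintype ι]
    {v : ι → E} (hv : ∀ i, v i ≠ 0) (h : Pairwise fun i j => ⟪v i, v j⟫ ≤ 0) :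
    Fintype.card ι ≤ 2 * finrank ℝ E := by
  classical
  obtain ⟨u, hu⟩ := exists_forall_inner_ne_zero hv
  have hpos := (linearIndependent_of_pairwise_inner_nonpos
    (v := fun i : {i // 0 < ⟪v i, u⟫} => v i) u (fun i => i.2)
    (h.comp_of_injective Subtype.val_injective)).fintype_card_le_finrank
  have hneg := (linearIndependent_of_pairwise_inner_nonpos
    (v := fun i : {i // ¬0 < ⟪v i, u⟫} => v i) (-u)
    (fun i => by simpa [inner_neg_right] using lt_of_le_of_ne (not_lt.mp i.2) (hu i))
    (h.comp_of_injective Subtype.val_injective)).fintype_card_le_finrank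
  rw [Fintype.card_subtype_compl] at hneg
  have := Fintype.card_subtype_le fun i => 0 < ⟪v i, u⟫
  omega

theorem nonpos_inner_card_bound_general (n N : ℕ)
    (x : Fin N → EuclideanSpace ℝ (Fin n))
    (hx : ∀ i, ‖x i‖ = 1)
    (h : ∀ i j, i ≠ j → ⟪x i, x j⟫ ≤ 0) :
    N ≤ 2 * n := by
  have hx0 : ∀ i, x i ≠ 0 := fun i => norm_ne_zero_iff.mp (by simp [hx i])
  simpa [finrank_euclideanSpace_fin] using
    card_le_two_mul_finrank_of_pairwise_inner_nonpos hx0 fun i j => h i j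

/-- Any set of `N` distinct unit vectors in ℝⁿ with pairwise inner products at
most 0 has `N ≤ 2n`. -/
theorem nonpos_inner_card_bound (n N : ℕ)
    (x : Fin N → EuclideanSpace ℝ (Fin n)) (hinj : Function.Injective x)
    (hx : ∀ i, ‖x i‖ = 1)
    (h : ∀ i j, i ≠ j → ⟪x i, x j⟫ ≤ 0) :
    N ≤ 2 * n :=
  nonpos_inner_card_bound_general n N x hx h
end
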